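/- arXiv:2505.04596 — 3 statements merged into one kernel-verified Lean document; each statement's English description precedes it below -/
import Mathlib

section
/- Let H, N^s, N^e, N be natural numbers with H ≥ 3, N^e ≥ 1, and N ≥ 1, and let V_1, V_2 ∈ {0,1,2,3}. For any period t ∈ {1,…,H}, any non-departing rank r_s ∈ {1,…,N^s}, and any departing rank r_e ∈ {1,…,N^e}, the value assigned to a departing cluster strictly exceeds the value assigned to a non-departing cluster of the same size: [(N^s+1)·H·2^{N^e+1−r_e} + V_1]·N > [(N^s+1)·(H−(t−1)) + N^s − r_s + V_2]·N. -/
/-- With horizon `H ≥ 3`, `Ne ≥ 1` departing clusters, `Ns`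
non-departing clusters, cluster size `N ≥ 1`, video-quality values
`V1, V2 ∈ {0,1,2,3}`, any period `t ∈ {1,…,H}`, non-departing rank
`rs ∈ {1,…,Ns}` and departing rank `re ∈ {1,…,Ne}`, the value of a departing
cluster strictly exceeds that of a non-departing cluster of the same size:
`[(Ns+1)·H·2^(Ne+1−re) + V1]·N > [(Ns+1)·(H−(t−1)) + Ns − rs + V2]·N`. -/
theorem departing_beats_nondeparting
    (H Ns Ne N : ℕ) (hH : 3 ≤ H) (hNe : 1 ≤ Ne) (hN : 1 ≤ N)
    (V1 V2 : ℕ) (hV1 : V1 ≤ 3) (hV2 : V2 ≤ 3)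
    (t : ℕ) (ht : t ∈ Finset.Icc 1 H)
    (rs : ℕ) (hrs : rs ∈ Finset.Icc 1 Ns)
    (re : ℕ) (hre : re ∈ Finset.Icc 1 Ne) :
    ((Ns + 1) * (H - (t - 1)) + (Ns - rs) + V2) * N
      < ((Ns + 1) * H * 2 ^ (Ne + 1 - re) + V1) * N := by
  simp only [Finset.mem_Icc] at ht hrs hre
  have hNs : 1 ≤ Ns := le_trans hrs.1 hrs.2
  have hle : ((Ns + 1) * (H - (t - 1)) + (Ns - rs) + V2)
      < (Ns + 1) * H * 2 ^ (Ne + 1 - re) := by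
    have h1 : (Ns + 1) * (H - (t - 1)) ≤ (Ns + 1) * H :=
      Nat.mul_le_mul_left _ (Nat.sub_le _ _)
    have h2 : 2 ≤ 2 ^ (Ne + 1 - re) := by
      have : 1 ≤ Ne + 1 - re := by omega
      calc 2 = 2 ^ 1 := rfl
        _ ≤ 2 ^ (Ne + 1 - re) := Nat.pow_le_pow_right (by norm_num) this
    have h3 : (Ns + 1) * H * 2 ≤ (Ns + 1) * H * 2 ^ (Ne + 1 - re) :=
      Nat.mul_le_mul_left _ h2
    have h4 : Ns + 3 < (Ns + 1) * H := by nlinarith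
    omega
  exact Nat.mul_lt_mul_of_lt_of_le (by omega) (le_refl N) hN
end

section
/- Let H, N^s, N^e, N be natural numbers with H ≥ 2, N ≥ 1, and let V_1, V_2 ∈ {0,1,2,3}. If r, r' ∈ {1,…,N^e} are departing-cluster ranks with r < r', then [(N^s+1)·H·2^{N^e+1−r} + V_1]·N > [(N^s+1)·H·2^{N^e+1−r'} + V_2]·N; i.e., among departing clusters of equal size, a cluster with strictly earlier predicted departure time always receives a strictly higher value, regardless of the video-quality terms. -/
/-- With horizon `H ≥ 2`, cluster size `N ≥ 1`, video-quality values
`V1, V2 ∈ {0,1,2,3}`, and departing ranks `r, r' ∈ {1,…,Ne}` with `r < r'`,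
the value of the earlier-departing cluster strictly exceeds that of the later
one, regardless of the video-quality terms:
`[(Ns+1)·H·2^(Ne+1−r) + V1]·N > [(Ns+1)·H·2^(Ne+1−r') + V2]·N`. -/
theorem earlier_departure_higher_value
    (H Ns Ne N : ℕ) (hH : 2 ≤ H) (hN : 1 ≤ N)
    (V1 V2 : ℕ) (hV1 : V1 ≤ 3) (hV2 : V2 ≤ 3)
    (r r' : ℕ) (hr : r ∈ Finset.Icc 1 Ne) (hr' : r' ∈ Finset.Icc 1 Ne)
    (hlt : r < r') :
    ((Ns + 1) * H * 2 ^ (Ne + 1 - r') + V2) * N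
      < ((Ns + 1) * H * 2 ^ (Ne + 1 - r) + V1) * N := by
  simp only [Finset.mem_Icc] at hr hr'
  refine Nat.mul_lt_mul_of_lt_of_le ?_ le_rfl (by omega)
  have h1 : Ne + 1 - r' + 1 ≤ Ne + 1 - r := by omega
  have h2 : 2 ^ (Ne + 1 - r' + 1) ≤ 2 ^ (Ne + 1 - r) :=
    Nat.pow_le_pow_right (by norm_num) h1
  have h3 : 2 ≤ 2 ^ (Ne + 1 - r') := by
    calc 2 = 2 ^ 1 := by norm_num
    _ ≤ 2 ^ (Ne + 1 - r') := Nat.pow_le_pow_right (by norm_num) (by omega)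
  have h4 : 2 ≤ (Ns + 1) * H := le_mul_of_one_le_of_le (by omega) hH
  rw [pow_succ] at h2
  nlinarith [Nat.mul_le_mul_left ((Ns+1)*H) h2]
end

section
/- Let l, n, m, T, q be positive natural numbers and H = T·q. Suppose flow variables satisfy the camera supply constraints, track-node flow conservation, fixed-location flow conservation, and window demand constraints of the dynamic network flow model, with x_{(K_j,H)S} ∈ {0,1} for each track cluster j and x_{(D_j,τ)S} ∈ ℕ for every j, τ. Then the number of track clusters that are interrogated during the horizon, i.e., the cardinality of { j ∈ {1,…,n} : x_{(K_j,H)S} = 1 }, is at most H·l − q·m. -/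
/-!
Every camera spends each of the `H` periods either on a track cluster or on a fixed location,
so the total flow out of the cameras is `H * l`. Each of the `m` fixed locations must be
visited at least once in each of the `q` windows, which absorbs at least `q * m` units, and
each interrogated cluster absorbs one of the remaining units.
-/

open Finset

lemma Finset.sum_comm_three {α β γ M : Type*} [AddCommMonoid M]
    (s : Finset α) (t : Finset β) (u : Finset γ) (f : α → β → γ → M) :
    ∑ a ∈ s, ∑ b ∈ t, ∑ c ∈ u, f a b c = ∑ c ∈ u, ∑ b ∈ t, ∑ a ∈ s, f a b c := by
  rw [sum_comm]
  refine (sum_congr rfl fun b _ => sum_comm).trans ?_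
  exact sum_comm

lemma Finset.card_filter_eq_one_le_sum {ι : Type*} (s : Finset ι) (f : ι → ℕ) :
    #(s.filter fun i => f i = 1) ≤ ∑ i ∈ s, f i := by
  rw [card_filter]
  exact sum_le_sum fun i _ => by split_ifs <;> omega

lemma sum_range_sub_eq_sum_Ioc {M : Type*} [AddCommMonoid M] (f : ℕ → M) (a T : ℕ) :
    ∑ k ∈ range T, f (a + T - k) = ∑ t ∈ Ioc a (a + T), f t := by
  rw [← sum_range_reflect, ← Ico_add_one_add_one_eq_Ioc, sum_Ico_eq_sum_range]
  refine sum_congr (by congr 1; omega) fun k hk => ?_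
  rw [mem_range] at hk
  congr 1
  omega

lemma sum_windows_eq_sum_Icc {M : Type*} [AddCommMonoid M] (f : ℕ → M) (T q : ℕ) :
    ∑ τ ∈ Icc 1 q, ∑ k ∈ range T, f (T * τ - k) = ∑ t ∈ Icc 1 (T * q), f t := by
  induction q with
  | zero => simp
  | succ q ih =>
    rw [sum_Icc_succ_top (Nat.le_add_left 1 q), ih, mul_add_one,
      sum_range_sub_eq_sum_Ioc f (T * q) T]
    exact sum_Ioc_consecutive f (Nat.zero_le _) (Nat.le_add_right _ _)

lemma le_sum_Icc_of_one_le_windows (f : ℕ → ℕ) (T q : ℕ)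
    (hwindow : ∀ τ ∈ Icc 1 q, 1 ≤ ∑ k ∈ range T, f (T * τ - k)) :
    q ≤ ∑ t ∈ Icc 1 (T * q), f t := by
  rw [← sum_windows_eq_sum_Icc]
  simpa using card_nsmul_le_sum _ _ 1 hwindow

theorem interrogated_clusters_bound_general
    (l n m T q : ℕ)
    (H : ℕ) (hH : H = T * q)
    (xRK : ℕ → ℕ → ℕ → ℕ)  -- camera i, period t, track cluster j
    (xRF : ℕ → ℕ → ℕ → ℕ)  -- camera i, period t, fixed location k
    (xKS : ℕ → ℕ)          -- track cluster j to sink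
    (xFD : ℕ → ℕ → ℕ)      -- fixed location j, period t, to D_{j,⌈t/T⌉}
    (xDS : ℕ → ℕ → ℕ)      -- demand node (j, τ) to sink
    (hsupply : ∀ i ∈ Finset.Icc 1 l, ∀ t ∈ Finset.Icc 1 H,
      (∑ j ∈ Finset.Icc 1 n, xRK i t j) + (∑ k ∈ Finset.Icc 1 m, xRF i t k) = 1)
    (htrack : ∀ j ∈ Finset.Icc 1 n,
      (∑ t ∈ Finset.Icc 1 H, ∑ i ∈ Finset.Icc 1 l, xRK i t j) = xKS j)
    (hfix : ∀ j ∈ Finset.Icc 1 m, ∀ t ∈ Finset.Icc 1 H,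
      (∑ i ∈ Finset.Icc 1 l, xRF i t j) = xFD j t)
    (hdemand : ∀ j ∈ Finset.Icc 1 m, ∀ τ ∈ Finset.Icc 1 q,
      (∑ k ∈ Finset.range T, xFD j (T * τ - k)) = 1 + xDS j τ) :
    ((Finset.Icc 1 n).filter (fun j => xKS j = 1)).card ≤ H * l - q * m := by
  have htotal :
      ∑ j ∈ Icc 1 n, xKS j + ∑ k ∈ Icc 1 m, ∑ t ∈ Icc 1 H, xFD k t = H * l := by
    have hcameras : ∑ i ∈ Icc 1 l, ∑ t ∈ Icc 1 H,
        ((∑ j ∈ Icc 1 n, xRK i t j) + ∑ k ∈ Icc 1 m, xRF i t k) = H * l := by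
      rw [sum_congr rfl fun i hi => sum_congr rfl (hsupply i hi)]
      simp [mul_comm]
    simp only [sum_add_distrib, sum_comm_three (Icc 1 l)] at hcameras
    rwa [sum_congr rfl htrack, sum_congr rfl fun k hk => sum_congr rfl (hfix k hk)] at hcameras
  have hfixed : q * m ≤ ∑ k ∈ Icc 1 m, ∑ t ∈ Icc 1 H, xFD k t := by
    simpa [hH, mul_comm] using card_nsmul_le_sum _ _ q fun k hk =>
      le_sum_Icc_of_one_le_windows (xFD k) T q fun τ hτ =>
        (hdemand k hk τ hτ).symm ▸ le_add_right le_rfl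
  have hclusters := card_filter_eq_one_le_sum (Icc 1 n) xKS
  omega

/-- In the dynamic network flow model with `l` cameras, `n` track
clusters, `m` fixed locations, window length `T`, `q` windows and horizon
`H = T * q`, if the flow variables satisfy the camera supply constraints,
track-node conservation, fixed-location conservation and window demand
constraints, with `xKS j ∈ {0,1}` for each track cluster `j`, then the number
of track clusters interrogated during the horizon, i.e. the cardinality of
`{ j ∈ {1,…,n} : xKS j = 1 }`, is at most `H * l - q * m`. -/
theorem interrogated_clusters_bound
    (l n m T q : ℕ) (hl : 0 < l) (hn : 0 < n) (hm : 0 < m) (hT : 0 < T) (hq : 0 < q)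
    (H : ℕ) (hH : H = T * q)
    (xRK : ℕ → ℕ → ℕ → ℕ)  -- camera i, period t, track cluster j
    (xRF : ℕ → ℕ → ℕ → ℕ)  -- camera i, period t, fixed location k
    (xKS : ℕ → ℕ)          -- track cluster j to sink
    (xFD : ℕ → ℕ → ℕ)      -- fixed location j, period t, to D_{j,⌈t/T⌉}
    (xDS : ℕ → ℕ → ℕ)      -- demand node (j, τ) to sink
    (hKSbin : ∀ j ∈ Finset.Icc 1 n, xKS j ≤ 1)
    (hsupply : ∀ i ∈ Finset.Icc 1 l, ∀ t ∈ Finset.Icc 1 H,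
      (∑ j ∈ Finset.Icc 1 n, xRK i t j) + (∑ k ∈ Finset.Icc 1 m, xRF i t k) = 1)
    (htrack : ∀ j ∈ Finset.Icc 1 n,
      (∑ t ∈ Finset.Icc 1 H, ∑ i ∈ Finset.Icc 1 l, xRK i t j) = xKS j)
    (hfix : ∀ j ∈ Finset.Icc 1 m, ∀ t ∈ Finset.Icc 1 H,
      (∑ i ∈ Finset.Icc 1 l, xRF i t j) = xFD j t)
    (hdemand : ∀ j ∈ Finset.Icc 1 m, ∀ τ ∈ Finset.Icc 1 q,
      (∑ k ∈ Finset.range T, xFD j (T * τ - k)) = 1 + xDS j τ) :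
    ((Finset.Icc 1 n).filter (fun j => xKS j = 1)).card ≤ H * l - q * m :=
  interrogated_clusters_bound_general l n m T q H hH xRK xRF xKS xFD xDS hsupply htrack hfix hdemand
end
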